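/- arXiv:0909.0666 — 3 statements merged into one kernel-verified Lean document; each statement's English description precedes it below -/
import Mathlib

section
/- Let p and q be distinct primes, and let m, n ≥ 2. Then no finite-index subgroup K of SL_m(ℤ_p) admits an injective group homomorphism into SL_n(ℤ_q). -/
/-! The elementary matrix `u = 1 + E₀₁` of `SL_m(ℤ_p)` has infinite order and, `q` being a unit of
`ℤ_p`, a `q ^ k`-th root for every `k`; a power of `u` lying in `K` keeps both properties inside `K`.
An injective `K → SL_n(ℤ_q) ⊆ GL_n(ℤ_q)` would carry it to an element `g` of the same kind, but
such `g` has finite order: with `c = |GL_n(𝔽_q)|`, `y = g ^ c ≡ 1 mod q`, hence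
`y ^ q ^ j ≡ 1 mod q ^ (j + 1)`. So the image of `y` in the finite group `GL_n(ℤ/q^(j+1))` has
`q`-power order while being a `q ^ k`-th power for all `k`, which forces it to be trivial; as this
holds for every `j`, `y = 1`. -/

open Matrix

section Divisibility

variable {G H : Type*}

def InfinitelyDivisible [Monoid G] (q : ℕ) (g : G) : Prop :=
  ∀ k : ℕ, ∃ z : G, z ^ q ^ k = g

namespace InfinitelyDivisible

variable {q : ℕ}

theorem map [Monoid G] [Monoid H] {g : G} (hg : InfinitelyDivisible q g) (f : G →* H) :
    InfinitelyDivisible q (f g) := fun k =>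
  let ⟨z, hz⟩ := hg k
  ⟨f z, by rw [← map_pow, hz]⟩

theorem pow [Monoid G] {g : G} (hg : InfinitelyDivisible q g) (d : ℕ) :
    InfinitelyDivisible q (g ^ d) := fun k =>
  let ⟨z, hz⟩ := hg k
  ⟨z ^ d, by rw [pow_right_comm, hz]⟩

theorem eq_one_of_pow_eq_one [Group G] [Finite G] (hq : q.Prime) {g : G}
    (hg : InfinitelyDivisible q g) {j : ℕ} (h : g ^ q ^ j = 1) : g = 1 := by
  set N := Nat.card G
  -- a root of order `q ^ v_q(N)` shows that `g` is killed by the prime-to-`q` part of `N`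
  obtain ⟨z, rfl⟩ := hg (N.factorization q)
  have h_compl : (z ^ q ^ N.factorization q) ^ (N / q ^ N.factorization q) = 1 := by
    rw [← pow_mul, Nat.ordProj_mul_ordCompl_eq_self]
    exact pow_card_eq_one'
  have hcop : (q ^ j).Coprime (N / q ^ N.factorization q) :=
    (Nat.coprime_ordCompl hq Nat.card_pos.ne').pow_left j
  simpa [hcop] using pow_gcd_eq_one.mpr ⟨h, h_compl⟩

end InfinitelyDivisible

end Divisibility

theorem natCast_pow_succ_dvd_pow_pow_sub_one {S : Type*} [Ring S] {q : ℕ} {x : S}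
    (h : (q : S) ∣ x - 1) (k : ℕ) : (q : S) ^ (k + 1) ∣ x ^ q ^ k - 1 := by
  obtain ⟨A, hA⟩ := h
  -- the commutative case for `1 + qX ∈ ℤ[X]`, evaluated at `X = A`
  obtain ⟨P, hP⟩ := dvd_sub_pow_of_dvd_sub (R := Polynomial ℤ) (p := q)
    (a := 1 + (q : Polynomial ℤ) * Polynomial.X) (b := 1) (by simp) k
  refine ⟨Polynomial.aeval A P, ?_⟩
  have hx : x = Polynomial.aeval A (1 + (q : Polynomial ℤ) * Polynomial.X) := by
    simp [← hA]
  simpa [hx] using congrArg (Polynomial.aeval A) hP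

namespace PadicInt

variable {q : ℕ} [Fact q.Prime] {ι : Type*} [Fintype ι] [DecidableEq ι]

theorem natCast_pow_dvd_iff_mapMatrix_toZModPow_eq_zero {J : ℕ} {M : Matrix ι ι ℤ_[q]} :
    (q : Matrix ι ι ℤ_[q]) ^ J ∣ M ↔ (toZModPow J).mapMatrix M = 0 := by
  constructor
  · rintro ⟨B, rfl⟩
    rw [map_mul, map_pow, map_natCast, ← Nat.cast_pow, ← diagonal_natCast, ZMod.natCast_self,
      diagonal_zero, zero_mul]
  · intro hM
    have hentry : ∀ a b, ∃ c, M a b = (q : ℤ_[q]) ^ J * c := fun a b => by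
      have : M a b ∈ RingHom.ker (toZModPow J) := congrFun₂ hM a b
      rw [ker_toZModPow] at this
      exact Ideal.mem_span_singleton.mp this
    choose B hB using hentry
    have hscalar : (q : Matrix ι ι ℤ_[q]) ^ J = diagonal fun _ => (q : ℤ_[q]) ^ J := by
      rw [← Nat.cast_pow, ← diagonal_natCast, Nat.cast_pow]
    exact ⟨of B, by ext a b; simp [hscalar, hB]⟩

theorem eq_zero_of_forall_natCast_pow_dvd {M : Matrix ι ι ℤ_[q]}
    (h : ∀ J, (q : Matrix ι ι ℤ_[q]) ^ J ∣ M) : M = 0 := by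
  ext a b
  refine ext_of_toZModPow.mp fun J => ?_
  simpa using congrFun₂ (natCast_pow_dvd_iff_mapMatrix_toZModPow_eq_zero.mp (h J)) a b

namespace GeneralLinearGroup

open Matrix.GeneralLinearGroup

theorem map_toZModPow_eq_one_iff {J : ℕ} {g : GL ι ℤ_[q]} :
    map (toZModPow J) g = 1 ↔ (q : Matrix ι ι ℤ_[q]) ^ J ∣ (g : Matrix ι ι ℤ_[q]) - 1 := by
  rw [natCast_pow_dvd_iff_mapMatrix_toZModPow_eq_zero, map_sub, map_one, sub_eq_zero,
    Units.ext_iff]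
  rfl

theorem eq_one_of_infinitelyDivisible_of_dvd_sub_one {g : GL ι ℤ_[q]}
    (hg : InfinitelyDivisible q g) (h1 : (q : Matrix ι ι ℤ_[q]) ∣ (g : Matrix ι ι ℤ_[q]) - 1) :
    g = 1 := by
  have hpow : ∀ j, (q : Matrix ι ι ℤ_[q]) ^ (j + 1) ∣ (g : Matrix ι ι ℤ_[q]) - 1 := fun j => by
    rw [← map_toZModPow_eq_one_iff]
    refine (hg.map _).eq_one_of_pow_eq_one Fact.out (j := j) ?_
    rw [← map_pow, map_toZModPow_eq_one_iff, Units.val_pow_eq_pow_val]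
    exact natCast_pow_succ_dvd_pow_pow_sub_one h1 j
  exact Units.ext <| sub_eq_zero.mp <| eq_zero_of_forall_natCast_pow_dvd fun J =>
    (pow_dvd_pow _ J.le_succ).trans (hpow J)

theorem isOfFinOrder_of_infinitelyDivisible {g : GL ι ℤ_[q]} (hg : InfinitelyDivisible q g) :
    IsOfFinOrder g := by
  set c := Nat.card (GL ι (ZMod (q ^ 1)))
  have hc : map (toZModPow 1) (g ^ c) = 1 := by rw [map_pow]; exact pow_card_eq_one'
  refine isOfFinOrder_iff_pow_eq_one.mpr ⟨c, Nat.card_pos,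
    eq_one_of_infinitelyDivisible_of_dvd_sub_one (hg.pow c) ?_⟩
  simpa using map_toZModPow_eq_one_iff.mp hc

end GeneralLinearGroup

end PadicInt

theorem Subgroup.exists_infinitelyDivisible_not_isOfFinOrder {G : Type*} [Group G]
    (K : Subgroup G) [K.FiniteIndex] {q : ℕ} {g : G} (hdiv : InfinitelyDivisible q g)
    (hg : ¬IsOfFinOrder g) : ∃ u : K, InfinitelyDivisible q u ∧ ¬IsOfFinOrder u := by
  have hmem : ∀ x : G, x ^ K.normalCore.index ∈ K :=
    fun x => K.normalCore_le (K.normalCore.pow_index_mem x)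
  refine ⟨⟨_, hmem g⟩, fun k => ?_, fun hfin => ?_⟩
  · obtain ⟨z, hz⟩ := hdiv k
    exact ⟨⟨_, hmem z⟩, Subtype.ext (by simp [pow_right_comm, hz])⟩
  · have := K.subtype_injective.isOfFinOrder_iff.mpr hfin
    exact hg ((isOfFinOrder_pow.mp this).resolve_right Subgroup.FiniteIndex.index_ne_zero)

namespace Matrix.SpecialLinearGroup

variable {ι R : Type*} [Fintype ι] [DecidableEq ι] [CommRing R] {i j : ι}

theorem transvection_pow (hij : i ≠ j) (b : R) (k : ℕ) :
    transvection hij b ^ k = transvection hij (k * b) := by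
  induction k with
  | zero => simp
  | succ k ih =>
    rw [pow_succ, ih, ← transvection_add]
    congr 1
    push_cast
    ring

theorem transvection_eq_one_iff (hij : i ≠ j) {b : R} : transvection hij b = 1 ↔ b = 0 :=
  ⟨fun h => (transvection_mem_center_iff hij b).mp (h ▸ Subgroup.one_mem _),
    fun h => h ▸ transvection_coeff_zero hij⟩

theorem infinitelyDivisible_transvection (hij : i ≠ j) {q : ℕ} (hq : IsUnit (q : R)) (b : R) :
    InfinitelyDivisible q (transvection hij b) := fun k =>
  ⟨transvection hij (↑(hq.unit⁻¹ ^ k) * b), by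
    rw [transvection_pow hij, Nat.cast_pow, ← mul_assoc, Units.val_pow_eq_pow_val, ← mul_pow,
      hq.mul_val_inv, one_pow, one_mul]⟩

theorem not_isOfFinOrder_transvection [NoZeroDivisors R] [CharZero R] (hij : i ≠ j) {b : R}
    (hb : b ≠ 0) :
    ¬IsOfFinOrder (transvection hij b) := by
  rw [isOfFinOrder_iff_pow_eq_one]
  rintro ⟨k, hk, h⟩
  rw [transvection_pow hij, transvection_eq_one_iff hij] at h
  exact mul_ne_zero (Nat.cast_ne_zero.mpr hk.ne') hb h

end Matrix.SpecialLinearGroup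

open Matrix.SpecialLinearGroup in
theorem no_embedding_of_finiteIndex_subgroup_SL_padic_general
    (p q : ℕ) [Fact p.Prime] [Fact q.Prime] (hpq : p ≠ q)
    (m n : ℕ) (hm : 2 ≤ m)
    (K : Subgroup (Matrix.SpecialLinearGroup (Fin m) ℤ_[p])) (hK : K.FiniteIndex) :
    ¬ ∃ φ : K →* Matrix.SpecialLinearGroup (Fin n) ℤ_[q], Function.Injective φ := by
  rintro ⟨φ, hφ⟩
  have h01 : (⟨0, by omega⟩ : Fin m) ≠ ⟨1, by omega⟩ := by simp
  have hq_unit : IsUnit (q : ℤ_[p]) := PadicInt.isUnit_iff.mpr <|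
    PadicInt.norm_natCast_eq_one_iff.mpr <| (Nat.coprime_primes Fact.out Fact.out).mpr hpq
  obtain ⟨u, hu_div, hu_inf⟩ := K.exists_infinitelyDivisible_not_isOfFinOrder
    (infinitelyDivisible_transvection h01 hq_unit 1) (not_isOfFinOrder_transvection h01 one_ne_zero)
  have hψ : Function.Injective (toGL.comp φ) := toGL_injective.comp hφ
  exact hu_inf <| hψ.isOfFinOrder_iff.mp <|
    PadicInt.GeneralLinearGroup.isOfFinOrder_of_infinitelyDivisible (hu_div.map _)

/-- No finite-index subgroup of `SL_m(ℤ_p)` embeds into `SL_n(ℤ_q)` for distinct primes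
`p, q` and `m, n ≥ 2`. -/
theorem no_embedding_of_finiteIndex_subgroup_SL_padic
    (p q : ℕ) [Fact p.Prime] [Fact q.Prime] (hpq : p ≠ q)
    (m n : ℕ) (hm : 2 ≤ m) (hn : 2 ≤ n)
    (K : Subgroup (Matrix.SpecialLinearGroup (Fin m) ℤ_[p])) (hK : K.FiniteIndex) :
    ¬ ∃ φ : K →* Matrix.SpecialLinearGroup (Fin n) ℤ_[q], Function.Injective φ :=
  no_embedding_of_finiteIndex_subgroup_SL_padic_general p q hpq m n hm K hK
end

section
/- Let Γ₁ be a countable dense subgroup of a compact group K₁ and L₁ ≤ K₁ a closed subgroup. Then the action of Γ₁ on K₁/L₁ is uniquely ergodic: the Haar measure (pushforward of Haar measure on K₁) is the unique Γ₁-invariant Borel probability measure on K₁/L₁. -/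
/-!
`g ↦ ∫ f (g • x) dν` is continuous and constant on the dense subgroup, hence constant. Integrating
it against Haar measure `μ` and swapping the integrals (Fubini for continuous functions on compact
spaces needs neither σ-finiteness nor second countability) turns it into `∫ f dm`, `m` the
pushforward of `μ`, by right invariance of `μ`. So `ν` and `m` have the same integrals against
continuous functions, hence agree on zero sets `ψ ⁻¹' {1}`.

As `K/L` need not be metrizable, this does not yet identify the measures. But, as in Halmos'
theorem that Haar measure is completion regular, the everywhere-positive core of an
`L`-saturated compact set is an `L`-saturated compact Gδ, whose image in `K/L` is again a
compact Gδ, hence a zero set. Thus `m` is inner regular with respect to zero sets, so `m ≤ ν`,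
and equality of total masses gives `m = ν`.
-/

open MeasureTheory Set Filter Topology
open scoped Pointwise

theorem IsGδ.image_of_preimage_image_subset {X Y : Type*} [TopologicalSpace X] [CompactSpace X]
    [TopologicalSpace Y] [T2Space Y] {f : X → Y} (hf : Continuous f)
    (hsurj : Function.Surjective f) {E : Set X} (hE : IsGδ E) (hsat : f ⁻¹' (f '' E) ⊆ E) :
    IsGδ (f '' E) := by
  obtain ⟨U, hU, rfl⟩ := hE.eq_iInter_nat
  -- a fibre meets the complement of `⋂ U n` iff it meets the complement of some `U n`
  have himage : f '' ⋂ n, U n = ⋂ n, (f '' (U n)ᶜ)ᶜ := by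
    refine Subset.antisymm (fun y hy => mem_iInter.2 fun n ⟨z, hzU, hzy⟩ => ?_) fun y hy => ?_
    · exact hzU (mem_iInter.1 (hsat (hzy ▸ hy : f z ∈ _)) n)
    · obtain ⟨x, rfl⟩ := hsurj y
      exact mem_image_of_mem f (mem_iInter.2 fun n => not_not.1 fun hx =>
        mem_iInter.1 hy n (mem_image_of_mem f hx))
  rw [himage]
  exact .iInter_of_isOpen fun n => ((hU n).isClosed_compl.isCompact.image hf).isClosed.isOpen_compl

namespace MeasureTheory

section CompactSpace

variable {X : Type*} [TopologicalSpace X] [CompactSpace X] [MeasurableSpace X]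
  [OpensMeasurableSpace X]

theorem _root_.ContinuousMap.integrable_of_compactSpace (ν : Measure X) [IsFiniteMeasure ν]
    (f : C(X, ℝ)) : Integrable f ν :=
  f.continuous.integrable_of_hasCompactSupport (HasCompactSupport.of_compactSpace f)

theorem lipschitzWith_integral_continuousMap (ν : Measure X) [IsFiniteMeasure ν] :
    LipschitzWith ⟨ν.real univ, measureReal_nonneg⟩ fun f : C(X, ℝ) => ∫ x, f x ∂ν := by
  refine LipschitzWith.of_dist_le_mul fun f g => ?_
  rw [dist_eq_norm, dist_eq_norm, ← integral_sub (f.integrable_of_compactSpace ν)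
    (g.integrable_of_compactSpace ν), mul_comm]
  exact norm_integral_le_of_norm_le_const
    (Eventually.of_forall fun x => (f - g).norm_coe_le_norm x)

variable {K : Type*} [Monoid K] [TopologicalSpace K] [MulAction K X] [ContinuousSMul K X]

theorem continuous_integral_comp_smul (ν : Measure X) [IsFiniteMeasure ν] (f : C(X, ℝ)) :
    Continuous fun g : K => ∫ x, f (g • x) ∂ν :=
  (lipschitzWith_integral_continuousMap ν).continuous.comp
    (ContinuousMap.curry ⟨fun p : K × X => f (p.1 • p.2), by fun_prop⟩).continuous

end CompactSpace

section CompactAction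

variable {X : Type*} [TopologicalSpace X] [CompactSpace X] [MeasurableSpace X] [BorelSpace X]
  {K : Type*} [Monoid K] [TopologicalSpace K] [MulAction K X] [ContinuousSMul K X]

theorem integral_comp_smul_of_dense (ν : Measure X) [IsFiniteMeasure ν] {Γ : Set K} (hΓ : Dense Γ)
    (hinv : ∀ γ ∈ Γ, ν.map (γ • ·) = ν) (f : C(X, ℝ)) (g : K) :
    ∫ x, f (g • x) ∂ν = ∫ x, f x ∂ν := by
  refine congrFun (Continuous.ext_on hΓ (continuous_integral_comp_smul ν f) continuous_const
    fun γ hγ => ?_) g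
  conv_rhs => rw [← hinv γ hγ]
  exact (integral_map (continuous_const_smul γ).aemeasurable f.continuous.aestronglyMeasurable).symm

theorem integral_eq_integral_integral_smul_of_dense [CompactSpace K] [MeasurableSpace K]
    [OpensMeasurableSpace K] (μ : Measure K) [IsProbabilityMeasure μ] (ν : Measure X)
    [IsFiniteMeasure ν] {Γ : Set K} (hΓ : Dense Γ) (hinv : ∀ γ ∈ Γ, ν.map (γ • ·) = ν)
    (f : C(X, ℝ)) :
    ∫ x, f x ∂ν = ∫ x, ∫ g, f (g • x) ∂μ ∂ν := by
  calc ∫ x, f x ∂ν = ∫ g, ∫ x, f (g • x) ∂ν ∂μ := by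
        simp [integral_comp_smul_of_dense ν hΓ hinv f]
    _ = ∫ x, ∫ g, f (g • x) ∂μ ∂ν :=
        integral_integral_swap_of_hasCompactSupport (f := fun g x => f (g • x)) (by fun_prop)
          (HasCompactSupport.of_compactSpace _)

end CompactAction

section Quotient

variable {K : Type*} [Group K] [TopologicalSpace K] [IsTopologicalGroup K]
  [MeasurableSpace K] [BorelSpace K] {L : Subgroup K}
  [MeasurableSpace (K ⧸ L)] [BorelSpace (K ⧸ L)]

theorem integral_comp_smul_mk (μ : Measure K) [μ.IsMulRightInvariant] (f : C(K ⧸ L, ℝ))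
    (k : K) :
    ∫ g, f (g • (k : K ⧸ L)) ∂μ = ∫ y, f y ∂(μ.map (QuotientGroup.mk : K → K ⧸ L)) := by
  simp_rw [MulAction.Quotient.smul_mk, smul_eq_mul]
  rw [integral_mul_right_eq_self (fun g : K => f g) k,
    integral_map QuotientGroup.continuous_mk.aemeasurable f.continuous.aestronglyMeasurable]

theorem integral_eq_integral_map_mk_of_dense [CompactSpace K] (μ : Measure K)
    [μ.IsMulRightInvariant] [IsProbabilityMeasure μ] (ν : Measure (K ⧸ L))
    [IsProbabilityMeasure ν] {Γ : Set K} (hΓ : Dense Γ) (hinv : ∀ γ ∈ Γ, ν.map (γ • ·) = ν)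
    (f : C(K ⧸ L, ℝ)) :
    ∫ x, f x ∂ν = ∫ y, f y ∂(μ.map (QuotientGroup.mk : K → K ⧸ L)) := by
  have hconst (x : K ⧸ L) :
      ∫ g, f (g • x) ∂μ = ∫ y, f y ∂(μ.map (QuotientGroup.mk : K → K ⧸ L)) := by
    obtain ⟨k, rfl⟩ := QuotientGroup.mk_surjective x
    exact integral_comp_smul_mk μ f k
  simp [integral_eq_integral_integral_smul_of_dense μ ν hΓ hinv f, hconst]

end Quotient

section MeasureDetermination

variable {X : Type*} [TopologicalSpace X] [MeasurableSpace X] [OpensMeasurableSpace X]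
  {ν m : Measure X} [IsFiniteMeasure ν] [IsFiniteMeasure m]

theorem map_eq_map_of_forall_integral_eq (h : ∀ f : C(X, ℝ), ∫ x, f x ∂ν = ∫ x, f x ∂m)
    (ψ : C(X, ℝ)) : ν.map ψ = m.map ψ := by
  refine ext_of_forall_integral_eq_of_IsFiniteMeasure fun g => ?_
  rw [integral_map ψ.continuous.aemeasurable g.continuous.aestronglyMeasurable,
    integral_map ψ.continuous.aemeasurable g.continuous.aestronglyMeasurable]
  exact h (g.toContinuousMap.comp ψ)

theorem le_of_innerRegularWRT_preimage_one_of_forall_integral_eq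
    (hm : m.InnerRegularWRT (fun s => ∃ ψ : C(X, ℝ), s = ψ ⁻¹' {1}) MeasurableSet)
    (h : ∀ f : C(X, ℝ), ∫ x, f x ∂ν = ∫ x, f x ∂m) : m ≤ ν := by
  refine Measure.le_iff.2 fun s hs => le_of_forall_lt fun r hr => ?_
  obtain ⟨_, hψs, ⟨ψ, rfl⟩, hrψ⟩ := hm hs r hr
  calc r < m (ψ ⁻¹' {1}) := hrψ
    _ = ν (ψ ⁻¹' {1}) := by
        rw [← Measure.map_apply ψ.continuous.measurable (measurableSet_singleton 1),
          ← Measure.map_apply ψ.continuous.measurable (measurableSet_singleton 1),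
          map_eq_map_of_forall_integral_eq h ψ]
    _ ≤ ν s := measure_mono hψs

end MeasureDetermination

section CompactGroup

variable {G : Type*} [Group G] [TopologicalSpace G] [IsTopologicalGroup G] [MeasurableSpace G]
  [BorelSpace G] (μ : Measure G)

theorem Measure.IsHaarMeasure.isMulRightInvariant_of_isProbabilityMeasure [LocallyCompactSpace G]
    [μ.IsHaarMeasure] [IsProbabilityMeasure μ] : μ.IsMulRightInvariant where
  map_mul_right_eq_self g :=
    have : IsProbabilityMeasure (μ.map (· * g)) :=
      Measure.isProbabilityMeasure_map (measurable_mul_const g).aemeasurable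
    Measure.isHaarMeasure_eq_of_isProbabilityMeasure _ μ

theorem Measure.mul_mem_everywherePosSubset [μ.IsMulRightInvariant] {k : Set G} {g : G}
    (hk : MapsTo (· * g) k k) {x : G} (hx : x ∈ μ.everywherePosSubset k) :
    x * g ∈ μ.everywherePosSubset k := by
  refine ⟨hk hx.1, fun n hn => ?_⟩
  have := hx.2 _ ((continuous_mul_const g).continuousWithinAt.tendsto_nhdsWithin hk hn)
  rwa [measure_preimage_mul_right] at this

variable [CompactSpace G] [μ.IsHaarMeasure] {L : Subgroup G}

theorem innerRegularWRT_isCompact_isClosed_mul_subgroup_subset (hL : IsClosed (L : Set G)) :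
    μ.InnerRegularWRT (fun k => IsCompact k ∧ IsClosed k ∧ k * L ⊆ k)
      (fun t => MeasurableSet t ∧ t * L ⊆ t) := by
  rintro t ⟨ht, htL⟩ r hr
  obtain ⟨C, hCt, hC, hrC⟩ := Measure.InnerRegular.innerRegular ht r hr
  refine ⟨C * L, (mul_subset_mul_right hCt).trans htL,
    ⟨hC.mul hL.isCompact, hL.mul_left_of_isCompact hC, ?_⟩,
    hrC.trans_le (measure_mono (subset_mul_left C L.one_mem))⟩
  rw [mul_assoc, coe_mul_coe]

theorem innerRegularWRT_isCompact_isGδ_mul_subgroup_subset [μ.IsMulRightInvariant] :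
    μ.InnerRegularWRT (fun E => IsCompact E ∧ IsGδ E ∧ E * L ⊆ E)
      (fun k => IsCompact k ∧ IsClosed k ∧ k * L ⊆ k) := by
  rintro k ⟨hk, hkc, hkL⟩ r hr
  have hE : μ.IsEverywherePos (μ.everywherePosSubset k) :=
    Measure.isEverywherePos_everywherePosSubset hkc.measurableSet
  refine ⟨μ.everywherePosSubset k, Measure.everywherePosSubset_subset μ k,
    ⟨hk.everywherePosSubset, hE.IsGdelta_of_isMulLeftInvariant hk.everywherePosSubset
      hkc.everywherePosSubset, ?_⟩, ?_⟩
  · rintro _ ⟨x, hx, l, hl, rfl⟩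
    exact Measure.mul_mem_everywherePosSubset μ (fun y hy => hkL (mul_mem_mul hy hl)) hx
  · rwa [measure_congr (Measure.everywherePosSubset_ae_eq hkc.measurableSet)]

theorem innerRegularWRT_preimage_one_map_mk [μ.IsMulRightInvariant] (hL : IsClosed (L : Set G))
    [MeasurableSpace (G ⧸ L)] [BorelSpace (G ⧸ L)] :
    (μ.map (QuotientGroup.mk : G → G ⧸ L)).InnerRegularWRT
      (fun s => ∃ ψ : C(G ⧸ L, ℝ), s = ψ ⁻¹' {1}) MeasurableSet := by
  have : IsClosed (L : Set G) := hL
  intro s hs r hr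
  rw [Measure.map_apply QuotientGroup.continuous_mk.measurable hs] at hr
  have hsat : QuotientGroup.mk ⁻¹' s * (L : Set G) ⊆ QuotientGroup.mk ⁻¹' s := by
    rintro _ ⟨x, hx, l, hl, rfl⟩
    rwa [mem_preimage, QuotientGroup.mk_mul_of_mem x hl]
  obtain ⟨E, hEs, ⟨hE, hEδ, hEL⟩, hrE⟩ :=
    (innerRegularWRT_isCompact_isGδ_mul_subgroup_subset μ).trans
      (innerRegularWRT_isCompact_isClosed_mul_subgroup_subset μ hL)
      ⟨QuotientGroup.continuous_mk.measurable hs, hsat⟩ r hr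
  have hEsat : QuotientGroup.mk ⁻¹' ((QuotientGroup.mk : G → G ⧸ L) '' E) = E :=
    (QuotientGroup.preimage_image_mk_eq_mul L E).trans (hEL.antisymm (subset_mul_left E L.one_mem))
  obtain ⟨ψ, hψ, -⟩ := exists_continuous_one_zero_of_isCompact_of_isGδ
    (hE.image QuotientGroup.continuous_mk)
    (hEδ.image_of_preimage_image_subset QuotientGroup.continuous_mk
      QuotientGroup.mk_surjective hEsat.subset) isClosed_empty (disjoint_empty _)
  refine ⟨_, image_subset_iff.2 hEs, ⟨ψ, hψ⟩, ?_⟩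
  rwa [Measure.map_apply QuotientGroup.continuous_mk.measurable
    (hψ ▸ (isClosed_singleton.preimage ψ.continuous).measurableSet), hEsat]

end CompactGroup

end MeasureTheory

theorem translation_action_uniquely_ergodic_general
    {K₁ : Type*} [Group K₁] [TopologicalSpace K₁] [IsTopologicalGroup K₁] [CompactSpace K₁]
    [MeasurableSpace K₁] [BorelSpace K₁]
    (μ : Measure K₁) [μ.IsHaarMeasure] [IsProbabilityMeasure μ]
    (L₁ : Subgroup K₁) (hL₁ : IsClosed (L₁ : Set K₁))
    [MeasurableSpace (K₁ ⧸ L₁)] [BorelSpace (K₁ ⧸ L₁)]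
    (Γ₁ : Subgroup K₁) (hΓ₁ : Dense (Γ₁ : Set K₁))
    (ν : Measure (K₁ ⧸ L₁)) [IsProbabilityMeasure ν]
    (hinv : ∀ γ : Γ₁, ν.map (fun x => (γ : K₁) • x) = ν) :
    ν = μ.map (QuotientGroup.mk : K₁ → K₁ ⧸ L₁) := by
  have := Measure.IsHaarMeasure.isMulRightInvariant_of_isProbabilityMeasure μ
  have hint := integral_eq_integral_map_mk_of_dense μ ν hΓ₁ fun γ hγ => hinv ⟨γ, hγ⟩
  have hle := le_of_innerRegularWRT_preimage_one_of_forall_integral_eq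
    (innerRegularWRT_preimage_one_map_mk μ hL₁) hint
  refine (Measure.eq_of_le_of_measure_univ_eq hle ?_).symm
  rw [Measure.map_apply QuotientGroup.continuous_mk.measurable MeasurableSet.univ, preimage_univ,
    measure_univ, measure_univ]

/-- Unique ergodicity: if `Γ₁` is a countable dense subgroup of a compact group `K₁` and
`L₁ ≤ K₁` is closed, then the pushforward of Haar measure is the unique `Γ₁`-invariant
Borel probability measure on `K₁/L₁`. -/
theorem translation_action_uniquely_ergodic
    {K₁ : Type*} [Group K₁] [TopologicalSpace K₁] [IsTopologicalGroup K₁] [CompactSpace K₁]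
    [MeasurableSpace K₁] [BorelSpace K₁]
    (μ : Measure K₁) [μ.IsHaarMeasure] [IsProbabilityMeasure μ]
    (L₁ : Subgroup K₁) (hL₁ : IsClosed (L₁ : Set K₁))
    [MeasurableSpace (K₁ ⧸ L₁)] [BorelSpace (K₁ ⧸ L₁)]
    (Γ₁ : Subgroup K₁) [Countable Γ₁] (hΓ₁ : Dense (Γ₁ : Set K₁))
    (ν : Measure (K₁ ⧸ L₁)) [IsProbabilityMeasure ν]
    (hinv : ∀ γ : Γ₁, ν.map (fun x => (γ : K₁) • x) = ν) :
    ν = μ.map (QuotientGroup.mk : K₁ → K₁ ⧸ L₁) :=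
  translation_action_uniquely_ergodic_general μ L₁ hL₁ Γ₁ hΓ₁ ν hinv
end

section
/- For i = 0, 1 let Γ_i be a countable dense subgroup of a compact group K_i, with closed subgroups L_i ≤ K_i, and assume the action of K₁ on K₁/L₁ has trivial kernel. Suppose φ : Γ₀ → Γ₁ is a surjective homomorphism and (φ, f) is a homomorphism of permutation groups from Γ₀ ↷ K₀/L₀ to Γ₁ ↷ K₁/L₁ with f Borel. Then φ extends to a continuous homomorphism Φ : K₀ → K₁. -/
/-!
Let `G` be the closure in `K₀ × K₁` of the graph of `φ`, and `g = f ∘ (K₀ → K₀ ⧸ L₀)`. By the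
equivariance of `f` and the left invariance of Haar measure, the correlations
`∫ u (a * x) * v (b • g x) dμ` (`u`, `v` continuous) do not depend on `(a, b)` along the graph,
hence on all of `G` by continuity. For `(1, n) ∈ G`, density of continuous functions in `L²`
turns this into `v (n • g x) = v (g x)` for a.e. `x`, and a compactness argument produces a point of
`K₁ ⧸ L₁` fixed by the whole fibre `{n | (1, n) ∈ G}`. Since `φ` is onto, this fibre is stable
under conjugation by the dense subgroup `Γ₁`, so it fixes every point of `K₁ ⧸ L₁` and is trivial
because the action is faithful. A closed subgroup of `K₀ × K₁` with trivial fibre over `1` and dense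
first projection is the graph of a continuous homomorphism when `K₁` is compact.
-/

open MeasureTheory

theorem ae_eq_zero_of_forall_integral_mul_eq_zero {X : Type*} [TopologicalSpace X]
    [NormalSpace X] [CompactSpace X] [MeasurableSpace X] [BorelSpace X]
    {μ : Measure X} [IsFiniteMeasure μ] [μ.WeaklyRegular] {h : X → ℝ} (hh : MemLp h 2 μ)
    (horth : ∀ u : C(X, ℝ), ∫ x, u x * h x ∂μ = 0) : h =ᵐ[μ] 0 := by
  have hinner : ∀ u : C(X, ℝ), inner ℝ (ContinuousMap.toLp 2 μ ℝ u) (hh.toLp h) = 0 := by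
    intro u
    rw [L2.inner_def, ← horth u]
    refine integral_congr_ae ?_
    filter_upwards [ContinuousMap.coeFn_toLp (E := ℝ) (𝕜 := ℝ) (p := 2) μ u,
      hh.coeFn_toLp] with x hu hx
    rw [hu, hx]
    simp [mul_comm]
  have hzero : hh.toLp h = 0 := by
    have hdense := ContinuousMap.toLp_denseRange ℝ μ ℝ (p := 2) (by norm_num)
    have : (fun w => inner ℝ w (hh.toLp h)) = fun _ => (0 : ℝ) :=
      Continuous.ext_on hdense (by fun_prop) continuous_const (by rintro _ ⟨u, rfl⟩; exact hinner u)
    exact inner_self_eq_zero.1 (congrFun this _)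
  exact hh.coeFn_toLp.symm.trans (hzero ▸ Lp.coeFn_zero ℝ 2 μ)

theorem continuous_integral_comp_of_continuous {P Z α : Type*} [TopologicalSpace P]
    [TopologicalSpace Z] [CompactSpace Z] [MeasurableSpace α] {μ : Measure α} [IsFiniteMeasure μ]
    {F : P → C(Z, ℝ)} (hF : Continuous F) {h : α → Z}
    (hFh : ∀ p, AEStronglyMeasurable (fun x => F p (h x)) μ) :
    Continuous fun p => ∫ x, F p (h x) ∂μ := by
  have hint : ∀ p, Integrable (fun x => F p (h x)) μ := fun p =>
    .of_bound (hFh p) ‖F p‖ (ae_of_all _ fun x => (F p).norm_coe_le_norm _)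
  have hdist : ∀ p q, dist (∫ x, F p (h x) ∂μ) (∫ x, F q (h x) ∂μ)
      ≤ μ.real Set.univ * dist (F p) (F q) := by
    intro p q
    rw [dist_eq_norm, ← integral_sub (hint p) (hint q), dist_eq_norm, mul_comm]
    exact norm_integral_le_of_norm_le_const
      (ae_of_all _ fun x => (F p - F q).norm_coe_le_norm (h x))
  refine continuous_iff_continuousAt.2 fun p => tendsto_iff_dist_tendsto_zero.2 ?_
  refine squeeze_zero (fun _ => dist_nonneg) (fun q => hdist q p) ?_
  simpa using ((hF.tendsto p).dist (tendsto_const_nhds (x := F p))).const_mul (μ.real Set.univ)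

theorem exists_forall_smul_eq_self_of_ae {M Y α : Type*} [SMul M Y] [TopologicalSpace Y]
    [CompactSpace Y] [T2Space Y] [ContinuousConstSMul M Y] [MeasurableSpace α]
    {μ : Measure α} [NeZero μ] {g : α → Y} (S : Set M)
    (h : ∀ m ∈ S, ∀ χ : C(Y, ℝ), ∀ᵐ x ∂μ, χ (m • g x) = χ (g x)) :
    ∃ y : Y, ∀ m ∈ S, m • y = y := by
  by_contra! hnone
  have hsep : ∀ y : Y, ∃ m ∈ S, ∃ χ : C(Y, ℝ), χ (m • y) ≠ χ y := by
    intro y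
    obtain ⟨m, hm, hmy⟩ := hnone y
    obtain ⟨χ, hχ0, hχ1, -⟩ := exists_continuous_zero_one_of_isClosed isClosed_singleton
      isClosed_singleton (Set.disjoint_singleton.2 hmy)
    exact ⟨m, hm, χ, by simp [hχ0 rfl, hχ1 rfl]⟩
  choose m hmS χ hχ using hsep
  obtain ⟨t, ht⟩ := isCompact_univ.elim_finite_subcover (fun y => {z | χ y (m y • z) ≠ χ y z})
    (fun y => isOpen_ne_fun ((χ y).continuous.comp (continuous_const_smul _)) (χ y).continuous)
    (fun y _ => Set.mem_iUnion.2 ⟨y, hχ y⟩)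
  obtain ⟨x, hx⟩ := ((t.eventually_all).2 fun y _ => h (m y) (hmS y) (χ y)).exists
  obtain ⟨y, hyt, hy⟩ := Set.mem_iUnion₂.1 (ht (Set.mem_univ (g x)))
  exact hy (hx y hyt)

section Correlation

variable {M N X Y : Type*} [TopologicalSpace X] [MeasurableSpace X] [TopologicalSpace Y]
  [SMul N Y]

def smulCorrelationInvariants [SMul M X] (μ : Measure X) (g : X → Y) : Set (M × N) :=
  {p | ∀ (u : C(X, ℝ)) (v : C(Y, ℝ)),
    ∫ x, u (p.1 • x) * v (p.2 • g x) ∂μ = ∫ x, u x * v (g x) ∂μ}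

theorem isClosed_smulCorrelationInvariants [SMul M X] [TopologicalSpace M] [TopologicalSpace N]
    [ContinuousSMul M X] [ContinuousSMul N Y] [CompactSpace X] [CompactSpace Y]
    [OpensMeasurableSpace X] [MeasurableSpace Y] [BorelSpace Y] (μ : Measure X) [IsFiniteMeasure μ]
    {g : X → Y} (hg : Measurable g) :
    IsClosed (smulCorrelationInvariants (M := M) (N := N) μ g) := by
  simp only [smulCorrelationInvariants, Set.ofPred_forall]
  refine isClosed_iInter fun u => isClosed_iInter fun v => isClosed_eq ?_ continuous_const
  let F : M × N → C(X × Y, ℝ) := ContinuousMap.curry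
    ⟨fun q : (M × N) × (X × Y) => u (q.1.1 • q.2.1) * v (q.1.2 • q.2.2), by fun_prop⟩
  refine continuous_integral_comp_of_continuous (F := F) (h := fun x => (x, g x))
    (ContinuousMap.curry _).continuous fun p => ?_
  exact ((u.continuous.comp (continuous_const_smul p.1)).measurable.mul
    ((v.continuous.comp (continuous_const_smul p.2)).measurable.comp hg)).aestronglyMeasurable

theorem ae_smul_eq_of_mk_one_mem_smulCorrelationInvariants [Monoid M] [MulAction M X]
    [NormalSpace X] [CompactSpace X] [BorelSpace X] [CompactSpace Y] [ContinuousConstSMul N Y]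
    [MeasurableSpace Y] [BorelSpace Y]
    {μ : Measure X} [IsFiniteMeasure μ] [μ.WeaklyRegular] {g : X → Y} (hg : Measurable g) {n : N}
    (hn : ((1 : M), n) ∈ smulCorrelationInvariants μ g) (χ : C(Y, ℝ)) :
    ∀ᵐ x ∂μ, χ (n • g x) = χ (g x) := by
  let χn : C(Y, ℝ) := χ.comp ⟨(n • ·), continuous_const_smul n⟩
  have hmeas : Measurable fun x => χ (n • g x) - χ (g x) :=
    (χn.continuous.measurable.comp hg).sub (χ.continuous.measurable.comp hg)
  have hint : ∀ (u : C(X, ℝ)) (v : C(Y, ℝ)), Integrable (fun x => u x * v (g x)) μ := fun u v =>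
    .of_bound (u.continuous.measurable.mul (v.continuous.measurable.comp hg)).aestronglyMeasurable
      (‖u‖ * ‖v‖) (ae_of_all _ fun x => (norm_mul _ _).trans_le <|
        mul_le_mul (u.norm_coe_le_norm _) (v.norm_coe_le_norm _) (norm_nonneg _) (norm_nonneg _))
  have horth : ∀ u : C(X, ℝ), ∫ x, u x * (χ (n • g x) - χ (g x)) ∂μ = 0 := by
    intro u
    simp_rw [mul_sub]
    have hnu := hn u χ
    simp only [one_smul] at hnu
    exact (integral_sub (hint u χn) (hint u χ)).trans (sub_eq_zero.2 hnu)
  have hbound : ∀ x, ‖χ (n • g x) - χ (g x)‖ ≤ 2 * ‖χ‖ := fun x =>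
    (norm_sub_le _ _).trans (by linarith [χ.norm_coe_le_norm (n • g x), χ.norm_coe_le_norm (g x)])
  filter_upwards [ae_eq_zero_of_forall_integral_mul_eq_zero
    (.of_bound hmeas.aestronglyMeasurable _ (ae_of_all _ hbound)) horth] with x hx
  exact sub_eq_zero.1 hx

theorem mk_mem_smulCorrelationInvariants [Group X] [MeasurableMul X] {μ : Measure X}
    [μ.IsMulLeftInvariant] {g : X → Y} {a : X} {b : N} (h : ∀ᵐ x ∂μ, g (a * x) = b • g x) :
    (a, b) ∈ smulCorrelationInvariants μ g := by
  intro u v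
  calc ∫ x, u (a • x) * v (b • g x) ∂μ = ∫ x, u (a * x) * v (g (a * x)) ∂μ :=
        integral_congr_ae (h.mono fun x hx => by simp only [hx, smul_eq_mul])
    _ = ∫ x, u x * v (g x) ∂μ := integral_mul_left_eq_self (fun x => u x * v (g x)) a

end Correlation

section Graph

variable {K₀ K₁ : Type*} [Group K₀] [Group K₁] {G : Subgroup (K₀ × K₁)}

theorem snd_eq_of_mem_of_mem (hG : ∀ n, ((1 : K₀), n) ∈ G → n = 1) {a : K₀} {b b' : K₁}
    (hb : (a, b) ∈ G) (hb' : (a, b') ∈ G) : b = b' :=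
  inv_mul_eq_one.1 <| hG _ <| by simpa using G.mul_mem (G.inv_mem hb) hb'

theorem exists_continuous_monoidHom_forall_mem [TopologicalSpace K₀] [TopologicalSpace K₁]
    [CompactSpace K₁] (hGc : IsClosed (G : Set (K₀ × K₁)))
    (hdense : Dense (Prod.fst '' (G : Set (K₀ × K₁)))) (hG : ∀ n, ((1 : K₀), n) ∈ G → n = 1) :
    ∃ Φ : K₀ →* K₁, Continuous Φ ∧ ∀ a, (a, Φ a) ∈ G := by
  have hsurj : ∀ a : K₀, ∃ b, (a, b) ∈ G := by
    intro a
    obtain ⟨⟨a, b⟩, hab, rfl⟩ : a ∈ Prod.fst '' (G : Set (K₀ × K₁)) := by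
      rw [← (isClosedMap_fst_of_compactSpace _ hGc).closure_eq, hdense.closure_eq]
      trivial
    exact ⟨b, hab⟩
  choose Φ hΦ using hsurj
  have hmul : ∀ a b, Φ (a * b) = Φ a * Φ b := fun a b =>
    snd_eq_of_mem_of_mem hG (hΦ _) (G.mul_mem (hΦ a) (hΦ b))
  refine ⟨MonoidHom.mk' Φ hmul, continuous_iff_isClosed.2 fun C hC => ?_, hΦ⟩
  have hpre : Φ ⁻¹' C = Prod.fst '' ((G : Set (K₀ × K₁)) ∩ Set.univ ×ˢ C) := by
    ext a
    constructor
    · exact fun ha => ⟨(a, Φ a), ⟨hΦ a, trivial, ha⟩, rfl⟩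
    · rintro ⟨⟨a, b⟩, ⟨hab, -, hb⟩, rfl⟩
      exact snd_eq_of_mem_of_mem hG hab (hΦ a) ▸ hb
  exact hpre ▸ isClosedMap_fst_of_compactSpace _ (hGc.inter (isClosed_univ.prod hC))

end Graph

section Kernel

variable {K : Type*} [Group K] {L : Subgroup K}

theorem eq_one_of_forall_smul_smul_eq (hker : ∀ k : K, (∀ k' : K, k'⁻¹ * k * k' ∈ L) → k = 1)
    {n : K} {y : K ⧸ L} (h : ∀ k : K, n • k • y = k • y) : n = 1 := by
  obtain ⟨c, rfl⟩ := QuotientGroup.mk_surjective y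
  refine inv_eq_one.1 (hker _ fun k => ?_)
  have hk := h (k * c⁻¹)
  simp only [MulAction.Quotient.smul_mk, smul_eq_mul, inv_mul_cancel_right] at hk
  simpa [mul_assoc] using QuotientGroup.eq.1 hk

theorem eq_one_of_forall_conj_smul_eq [TopologicalSpace K] [IsTopologicalGroup K]
    [T2Space (K ⧸ L)] (hker : ∀ k : K, (∀ k' : K, k'⁻¹ * k * k' ∈ L) → k = 1) {Γ : Set K}
    (hΓ : Dense Γ) {n : K} {y : K ⧸ L} (h : ∀ γ ∈ Γ, (γ⁻¹ * n * γ) • y = y) : n = 1 := by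
  refine eq_one_of_forall_smul_smul_eq hker fun k => congrFun (Continuous.ext_on hΓ
    (f := fun k : K => n • k • y) (g := fun k : K => k • y) (by fun_prop) (by fun_prop)
    fun γ hγ => ?_) k
  simpa [mul_smul] using congrArg (γ • ·) (h γ hγ)

end Kernel

theorem surjective_permutation_homomorphism_extends_general
    {K₀ K₁ : Type*} [Group K₀] [TopologicalSpace K₀] [IsTopologicalGroup K₀] [CompactSpace K₀]
    [MeasurableSpace K₀] [BorelSpace K₀]
    [Group K₁] [TopologicalSpace K₁] [IsTopologicalGroup K₁] [CompactSpace K₁]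
    (L₀ : Subgroup K₀)
    (L₁ : Subgroup K₁) (hL₁ : IsClosed (L₁ : Set K₁))
    [MeasurableSpace (K₀ ⧸ L₀)] [BorelSpace (K₀ ⧸ L₀)]
    [MeasurableSpace (K₁ ⧸ L₁)] [BorelSpace (K₁ ⧸ L₁)]
    (μ : Measure K₀) [μ.IsHaarMeasure]
    (Γ₀ : Subgroup K₀) (hΓ₀ : Dense (Γ₀ : Set K₀))
    (Γ₁ : Subgroup K₁) (hΓ₁ : Dense (Γ₁ : Set K₁))
    (hker : ∀ k : K₁, (∀ k' : K₁, k'⁻¹ * k * k' ∈ L₁) → k = 1)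
    (φ : Γ₀ →* Γ₁) (hφ : Function.Surjective φ)
    (f : K₀ ⧸ L₀ → K₁ ⧸ L₁) (hf : Measurable f)
    (hhom : ∀ γ : Γ₀, ∀ᵐ x ∂(μ.map (QuotientGroup.mk : K₀ → K₀ ⧸ L₀)),
      f ((γ : K₀) • x) = ((φ γ : K₁)) • f x) :
    ∃ Φ : K₀ →* K₁, Continuous Φ ∧ ∀ γ : Γ₀, Φ γ = (φ γ : K₁) := by
  have : IsClosed (L₁ : Set K₁) := hL₁
  have hmk : Measurable (QuotientGroup.mk : K₀ → K₀ ⧸ L₀) := QuotientGroup.continuous_mk.measurable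
  let g : K₀ → K₁ ⧸ L₁ := f ∘ QuotientGroup.mk
  have hg : Measurable g := hf.comp hmk
  let G := ((Γ₀.subtype.prod (Γ₁.subtype.comp φ)).range).topologicalClosure
  have hgraph : ∀ γ : Γ₀, ((γ : K₀), (φ γ : K₁)) ∈ G := fun γ =>
    Subgroup.le_topologicalClosure _ ⟨γ, rfl⟩
  have hGinv : (G : Set (K₀ × K₁)) ⊆ smulCorrelationInvariants μ g := by
    rw [Subgroup.topologicalClosure_coe]
    refine closure_minimal ?_ (isClosed_smulCorrelationInvariants μ hg)
    rintro _ ⟨γ, rfl⟩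
    exact mk_mem_smulCorrelationInvariants (ae_of_ae_map hmk.aemeasurable (hhom γ))
  obtain ⟨y, hy⟩ := exists_forall_smul_eq_self_of_ae (μ := μ) (g := g) {n | ((1 : K₀), n) ∈ G}
    fun n hn => ae_smul_eq_of_mk_one_mem_smulCorrelationInvariants hg (hGinv hn)
  have hfiber : ∀ n, ((1 : K₀), n) ∈ G → n = 1 := by
    refine fun n hn => eq_one_of_forall_conj_smul_eq hker hΓ₁ fun γ₁ hγ₁ => hy _ ?_
    obtain ⟨γ₀, hγ₀⟩ := hφ ⟨γ₁, hγ₁⟩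
    simpa [hγ₀, mul_assoc] using G.mul_mem (G.mul_mem (G.inv_mem (hgraph γ₀)) hn) (hgraph γ₀)
  obtain ⟨Φ, hΦ, hΦG⟩ := exists_continuous_monoidHom_forall_mem (G := G)
    (Subgroup.isClosed_topologicalClosure _) (hΓ₀.mono fun k hk => ⟨_, hgraph ⟨k, hk⟩, rfl⟩) hfiber
  exact ⟨Φ, hΦ, fun γ => snd_eq_of_mem_of_mem hfiber (hΦG γ) (hgraph γ)⟩

/-- Furman's lemma: for `i = 0, 1` let `Γᵢ` be a countable dense subgroup of the compact
group `Kᵢ`, `Lᵢ ≤ Kᵢ` closed, and suppose the action of `K₁` on `K₁/L₁` has trivial kernel.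
If `φ : Γ₀ → Γ₁` is a surjective homomorphism and `(φ, f)` is a Borel homomorphism of
permutation groups from `Γ₀ ↷ K₀/L₀` to `Γ₁ ↷ K₁/L₁`, then `φ` extends to a continuous
homomorphism `Φ : K₀ → K₁`. -/
theorem surjective_permutation_homomorphism_extends
    {K₀ K₁ : Type*} [Group K₀] [TopologicalSpace K₀] [IsTopologicalGroup K₀] [CompactSpace K₀]
    [MeasurableSpace K₀] [BorelSpace K₀]
    [Group K₁] [TopologicalSpace K₁] [IsTopologicalGroup K₁] [CompactSpace K₁]
    (L₀ : Subgroup K₀) (hL₀ : IsClosed (L₀ : Set K₀))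
    (L₁ : Subgroup K₁) (hL₁ : IsClosed (L₁ : Set K₁))
    [MeasurableSpace (K₀ ⧸ L₀)] [BorelSpace (K₀ ⧸ L₀)]
    [MeasurableSpace (K₁ ⧸ L₁)] [BorelSpace (K₁ ⧸ L₁)]
    (μ : Measure K₀) [μ.IsHaarMeasure] [IsProbabilityMeasure μ]
    (Γ₀ : Subgroup K₀) [Countable Γ₀] (hΓ₀ : Dense (Γ₀ : Set K₀))
    (Γ₁ : Subgroup K₁) [Countable Γ₁] (hΓ₁ : Dense (Γ₁ : Set K₁))
    (hker : ∀ k : K₁, (∀ k' : K₁, k'⁻¹ * k * k' ∈ L₁) → k = 1)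
    (φ : Γ₀ →* Γ₁) (hφ : Function.Surjective φ)
    (f : K₀ ⧸ L₀ → K₁ ⧸ L₁) (hf : Measurable f)
    (hhom : ∀ γ : Γ₀, ∀ᵐ x ∂(μ.map (QuotientGroup.mk : K₀ → K₀ ⧸ L₀)),
      f ((γ : K₀) • x) = ((φ γ : K₁)) • f x) :
    ∃ Φ : K₀ →* K₁, Continuous Φ ∧ ∀ γ : Γ₀, Φ γ = (φ γ : K₁) :=
  surjective_permutation_homomorphism_extends_general L₀ L₁ hL₁ μ Γ₀ hΓ₀ Γ₁ hΓ₁ hker φ hφ f hf hhom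
end
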